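/- arXiv:2402.12559 — 10 statements merged into one kernel-verified Lean document; each statement's English description precedes it below -/
import Mathlib

section
/- Let D = (Σ, A) be a decoder and let x, y ∈ Σ be distinct letters that are twins in D, i.e., they have the same in-neighbour set and the same out-neighbour set in the directed graph D. Then a graph G admits a letter realisation over D if and only if G admits a letter realisation over the decoder D ∖ {x} obtained by deleting the letter x (and all arcs incident to it). -/
open scoped Classical

/-- A letter realisation of a graph `G` over a decoder with alphabet `α` and arc
relation `D`: a letter assignment `ℓ` and an ordering `c` (a bijection onto
`Fin (Fintype.card V)`, i.e. onto `[n]`) such that distinct vertices `x, y` are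
adjacent iff `(ℓ x, ℓ y) ∈ D` and `c x < c y`, or `(ℓ y, ℓ x) ∈ D` and `c y < c x`. -/
def IsLetterRealisation {V α : Type} [Fintype V] (G : SimpleGraph V)
    (D : α → α → Prop) (ℓ : V → α) (c : V ≃ Fin (Fintype.card V)) : Prop :=
  ∀ x y : V, x ≠ y →
    (G.Adj x y ↔ (D (ℓ x) (ℓ y) ∧ c x < c y) ∨ (D (ℓ y) (ℓ x) ∧ c y < c x))

/-- if `x ≠ y` are twin letters of the decoder `D` (same in- and
out-neighbour sets), then `G` has a letter realisation over `D` iff it has one over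
the decoder obtained by deleting the letter `x`. -/
theorem stmt_0 {V α : Type} [Fintype V] [Fintype α] (G : SimpleGraph V)
    (D : α → α → Prop) (x y : α) (hxy : x ≠ y)
    (hin : ∀ z, D z x ↔ D z y) (hout : ∀ z, D x z ↔ D y z) :
    (∃ (ℓ : V → α) (c : V ≃ Fin (Fintype.card V)), IsLetterRealisation G D ℓ c) ↔
    (∃ (ℓ : V → {z : α // z ≠ x}) (c : V ≃ Fin (Fintype.card V)),
      IsLetterRealisation G (fun a b => D a.1 b.1) ℓ c) := by
  constructor
  · rintro ⟨ℓ, c, h⟩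
    refine ⟨fun v => if hv : ℓ v = x then ⟨y, hxy.symm⟩ else ⟨ℓ v, hv⟩, c, ?_⟩
    intro u v huv
    have hD : ∀ a b : α, D ((if h : a = x then (⟨y, hxy.symm⟩ : {z : α // z ≠ x}) else ⟨a, h⟩) : {z : α // z ≠ x}).1
        ((if h : b = x then (⟨y, hxy.symm⟩ : {z : α // z ≠ x}) else ⟨b, h⟩) : {z : α // z ≠ x}).1 ↔ D a b := by
      intro a b
      by_cases ha : a = x <;> by_cases hb : b = x
      · rw [dif_pos ha, dif_pos hb, ha, hb]; exact Iff.symm ((hout x).trans (hin y))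
      · rw [dif_pos ha, dif_neg hb, ha]; exact (hout b).symm
      · rw [dif_neg ha, dif_pos hb, hb]; exact (hin a).symm
      · rw [dif_neg ha, dif_neg hb]
    rw [h u v huv]
    simp only [hD]
  · rintro ⟨ℓ, c, h⟩
    exact ⟨fun v => (ℓ v).1, c, h⟩
end

section
/- Let (ℓ, c) be a letter realisation of a graph G over a decoder D = (Σ, A). Then for any two distinct letters a, b ∈ Σ, the bipartite graph G[ℓ⁻¹(a), ℓ⁻¹(b)] consisting of the edges of G between ℓ⁻¹(a) and ℓ⁻¹(b) is a chain graph. -/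
open scoped Classical

/-- for distinct letters `a ≠ b`, the bipartite graph between
`ℓ⁻¹(a)` and `ℓ⁻¹(b)` is a chain graph: the neighbourhoods in `ℓ⁻¹(b)` of the
vertices of `ℓ⁻¹(a)` form a chain under inclusion. -/
theorem stmt_2 {V α : Type} [Fintype V] [Fintype α] (G : SimpleGraph V)
    (D : α → α → Prop) (ℓ : V → α) (c : V ≃ Fin (Fintype.card V))
    (h : IsLetterRealisation G D ℓ c) (a b : α) (hab : a ≠ b) :
    IsChain (· ⊆ ·)
      {N : Set V | ∃ u : V, ℓ u = a ∧ N = {v | ℓ v = b ∧ G.Adj u v}} := by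
  rintro N ⟨u, hu, rfl⟩ N' ⟨u', hu', rfl⟩ _
  have adj : ∀ w v : V, ℓ w = a → ℓ v = b →
      (G.Adj w v ↔ (D a b ∧ c w < c v) ∨ (D b a ∧ c v < c w)) := by
    intro w v hw hv
    have hne : w ≠ v := by rintro rfl; exact hab (hw.symm.trans hv)
    rw [h w v hne, hw, hv]
  have main : ∀ w w' : V, ℓ w = a → ℓ w' = a → c w ≤ c w' →
      {v | ℓ v = b ∧ G.Adj w' v} ⊆ {v | ℓ v = b ∧ G.Adj w v} ∨
      {v | ℓ v = b ∧ G.Adj w v} ⊆ {v | ℓ v = b ∧ G.Adj w' v} := by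
    intro w w' hw hw' hle
    by_cases hD : D a b
    · left
      rintro v ⟨hv, hadj⟩
      refine ⟨hv, (adj w v hw hv).2 ?_⟩
      have hvw : v ≠ w := by rintro rfl; exact hab (hw.symm.trans hv)
      have hcvw : c v ≠ c w := fun e => hvw (c.injective e)
      rcases (adj w' v hw' hv).1 hadj with ⟨_, hlt⟩ | ⟨hba, hlt⟩
      · exact Or.inl ⟨hD, lt_of_le_of_lt hle hlt⟩
      · rcases lt_or_ge (c v) (c w) with h1 | h1
        · exact Or.inr ⟨hba, h1⟩
        · exact Or.inl ⟨hD, lt_of_le_of_ne h1 hcvw.symm⟩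
    · right
      rintro v ⟨hv, hadj⟩
      refine ⟨hv, (adj w' v hw' hv).2 ?_⟩
      rcases (adj w v hw hv).1 hadj with ⟨hD', _⟩ | ⟨hba, hlt⟩
      · exact absurd hD' hD
      · exact Or.inr ⟨hba, lt_of_lt_of_le hlt hle⟩
  rcases le_total (c u) (c u') with hle | hle
  · exact (main u u' hu hu' hle).symm
  · exact main u' u hu' hu hle
end

section
/- For every finite graph G and every vertex x of G, the lettericity satisfies lett(G ∖ {x}) ≤ lett(G) ≤ 2·lett(G ∖ {x}) + 1, where G ∖ {x} is the induced subgraph on V(G) ∖ {x}. -/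
open scoped Classical

/-- The lettericity of `G`: the least `k` such that `G` has a letter realisation
over a decoder whose alphabet has (at most) `k` letters. -/
noncomputable def lettericity {V : Type} [Fintype V] (G : SimpleGraph V) : ℕ :=
  sInf {k | ∃ (D : Fin k → Fin k → Prop) (ℓ : V → Fin k) (c : V ≃ Fin (Fintype.card V)),
    IsLetterRealisation G D ℓ c}

lemma exists_mono_equiv {W : Type} [Fintype W] (f : W → ℕ) (hf : Function.Injective f) :
    ∃ c : W ≃ Fin (Fintype.card W), ∀ u v, c u < c v ↔ f u < f v := by
  letI : LinearOrder W := LinearOrder.lift' f hf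
  refine ⟨(monoEquivOfFin W rfl).symm.toEquiv, fun u v => ?_⟩
  have h : (monoEquivOfFin W rfl).symm u < (monoEquivOfFin W rfl).symm v ↔ u < v :=
    OrderIso.lt_iff_lt _
  exact h.trans Iff.rfl

lemma part2 {V : Type} [Fintype V] (G : SimpleGraph V) (x : V) (k : ℕ)
    (D : Fin k → Fin k → Prop) (ℓ : ↥{y : V | y ≠ x} → Fin k)
    (c : ↥{y : V | y ≠ x} ≃ Fin (Fintype.card ↥{y : V | y ≠ x}))
    (h : IsLetterRealisation (G.induce {y | y ≠ x}) D ℓ c) :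
    ∃ (D' : Fin (2*k+1) → Fin (2*k+1) → Prop) (ℓ' : V → Fin (2*k+1))
      (c' : V ≃ Fin (Fintype.card V)), IsLetterRealisation G D' ℓ' c' := by
  set D' : Fin (2*k+1) → Fin (2*k+1) → Prop := fun p q =>
    (p.1 = 2*k ∧ ∃ b : Fin k, q.1 = b.1 + k) ∨
    (∃ a b : Fin k, (p.1 = a.1 ∨ p.1 = a.1 + k) ∧ (q.1 = b.1 ∨ q.1 = b.1 + k) ∧ D a b)
    with hD'
  set ℓ' : V → Fin (2*k+1) := fun v =>
    if hv : v = x then ⟨2*k, by omega⟩ else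
      ⟨(ℓ ⟨v, hv⟩).1 + (if G.Adj x v then k else 0),
        by have := (ℓ ⟨v, hv⟩).2; split <;> omega⟩ with hℓ'
  set f : V → ℕ := fun v => if hv : v = x then 0 else (c ⟨v, hv⟩).1 + 1 with hf
  have hfinj : Function.Injective f := by
    intro u v huv
    simp only [hf] at huv
    by_cases hu : u = x
    · by_cases hv : v = x
      · exact hu.trans hv.symm
      · rw [dif_pos hu, dif_neg hv] at huv
        exact absurd huv (by omega)
    · by_cases hv : v = x
      · rw [dif_neg hu, dif_pos hv] at huv
        exact absurd huv (by omega)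
      · rw [dif_neg hu, dif_neg hv] at huv
        have hcc : c ⟨u, hu⟩ = c ⟨v, hv⟩ := Fin.ext (by omega)
        exact Subtype.ext_iff.1 (c.injective hcc)
  obtain ⟨c', hc'⟩ := exists_mono_equiv f hfinj
  refine ⟨D', ℓ', c', fun u v huv => ?_⟩
  -- evaluate ℓ' at x and at non-x
  have hℓx : (ℓ' x).1 = 2*k := by simp [hℓ']
  have hℓv : ∀ (v : V) (hv : v ≠ x), (ℓ' v).1 = (ℓ ⟨v, hv⟩).1 + (if G.Adj x v then k else 0) := by
    intro v hv; simp [hℓ', dif_neg hv]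
  have hadj_ind : ∀ (u v : V) (hu : u ≠ x) (hv : v ≠ x),
      (G.induce {y | y ≠ x}).Adj ⟨u, hu⟩ ⟨v, hv⟩ ↔ G.Adj u v := by
    intro u v hu hv; simp [SimpleGraph.comap_adj]
  -- key: decoding between non-x vertices
  have hdec : ∀ (u v : V) (hu : u ≠ x) (hv : v ≠ x),
      D' (ℓ' u) (ℓ' v) ↔ D (ℓ ⟨u, hu⟩) (ℓ ⟨v, hv⟩) := by
    intro u v hu hv
    rw [hD']
    constructor
    · rintro (⟨hp, _⟩ | ⟨a, b, hpa, hqb, hDab⟩)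
      · rw [hℓv u hu] at hp
        have := (ℓ ⟨u, hu⟩).2; split at hp <;> omega
      · have ha : a = ℓ ⟨u, hu⟩ := by
          apply Fin.ext
          rw [hℓv u hu] at hpa
          have := (ℓ ⟨u, hu⟩).2; have := a.2
          split at hpa <;> omega
        have hb : b = ℓ ⟨v, hv⟩ := by
          apply Fin.ext
          rw [hℓv v hv] at hqb
          have := (ℓ ⟨v, hv⟩).2; have := b.2
          split at hqb <;> omega
        rwa [ha, hb] at hDab
    · intro hDab
      refine Or.inr ⟨ℓ ⟨u, hu⟩, ℓ ⟨v, hv⟩, ?_, ?_, hDab⟩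
      · rw [hℓv u hu]; split <;> simp
      · rw [hℓv v hv]; split <;> simp
  -- decoding with x first
  have hdecx : ∀ (v : V) (hv : v ≠ x), D' (ℓ' x) (ℓ' v) ↔ G.Adj x v := by
    intro v hv
    rw [hD']
    constructor
    · rintro (⟨_, b, hqb⟩ | ⟨a, _, hpa, _, _⟩)
      · rw [hℓv v hv] at hqb
        by_contra hadj
        rw [if_neg hadj] at hqb
        have := (ℓ ⟨v, hv⟩).2; have := b.2; omega
      · rw [hℓx] at hpa; have := a.2; rcases hpa with hpa | hpa <;> omega
    · intro hadj
      refine Or.inl ⟨hℓx, ℓ ⟨v, hv⟩, ?_⟩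
      rw [hℓv v hv, if_pos hadj]
  have hnotx : ∀ (v : V) (hv : v ≠ x), ¬ D' (ℓ' v) (ℓ' x) := by
    intro v hv
    rw [hD']
    rintro (⟨hp, _⟩ | ⟨a, b, _, hqb, _⟩)
    · rw [hℓv v hv] at hp; have := (ℓ ⟨v, hv⟩).2; split at hp <;> omega
    · rw [hℓx] at hqb; have := b.2; omega
  -- order facts
  have hfx : ∀ (v : V) (hv : v ≠ x), c' x < c' v := by
    intro v hv
    rw [hc']
    simp [hf, dif_neg hv]
  have hford : ∀ (u v : V) (hu : u ≠ x) (hv : v ≠ x),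
      (c' u < c' v ↔ c ⟨u, hu⟩ < c ⟨v, hv⟩) := by
    intro u v hu hv
    rw [hc']
    simp only [hf, dif_neg hu, dif_neg hv]
    exact ⟨fun h => by omega, fun h => by omega⟩
  by_cases hu : u = x
  · rw [hu] at huv ⊢
    have hv : v ≠ x := fun h => huv h.symm
    constructor
    · intro hadj
      exact Or.inl ⟨(hdecx v hv).2 hadj, hfx v hv⟩
    · rintro (⟨hD, _⟩ | ⟨_, hlt⟩)
      · exact (hdecx v hv).1 hD
      · exact absurd hlt (not_lt.2 (le_of_lt (hfx v hv)))
  · by_cases hv : v = x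
    · subst hv
      constructor
      · intro hadj
        exact Or.inr ⟨(hdecx u hu).2 hadj.symm, hfx u hu⟩
      · rintro (⟨_, hlt⟩ | ⟨hD, _⟩)
        · exact absurd hlt (not_lt.2 (le_of_lt (hfx u hu)))
        · exact ((hdecx u hu).1 hD).symm
    · have := h ⟨u, hu⟩ ⟨v, hv⟩ (fun he => huv (Subtype.ext_iff.1 he))
      rw [hadj_ind u v hu hv] at this
      rw [this, hdec u v hu hv, hdec v u hv hu, hford u v hu hv, hford v u hv hu]


lemma lett_set_nonempty {V : Type} [Fintype V] (G : SimpleGraph V) :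
    {k | ∃ (D : Fin k → Fin k → Prop) (ℓ : V → Fin k) (c : V ≃ Fin (Fintype.card V)),
      IsLetterRealisation G D ℓ c}.Nonempty := by
  refine ⟨Fintype.card V, fun a b => G.Adj ((Fintype.equivFin V).symm a)
    ((Fintype.equivFin V).symm b), Fintype.equivFin V, Fintype.equivFin V, fun u v huv => ?_⟩
  simp only [Equiv.symm_apply_apply]
  constructor
  · intro h
    rcases lt_or_gt_of_ne (fun he => huv ((Fintype.equivFin V).injective he)) with h' | h'
    · exact Or.inl ⟨h, h'⟩
    · exact Or.inr ⟨h.symm, h'⟩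
  · rintro (⟨h, _⟩ | ⟨h, _⟩); exacts [h, h.symm]

lemma lett_mem {V : Type} [Fintype V] (G : SimpleGraph V) :
    ∃ (D : Fin (lettericity G) → Fin (lettericity G) → Prop) (ℓ : V → Fin (lettericity G))
      (c : V ≃ Fin (Fintype.card V)), IsLetterRealisation G D ℓ c :=
  Nat.sInf_mem (lett_set_nonempty G)

/-- `lett(G ∖ {x}) ≤ lett(G) ≤ 2·lett(G ∖ {x}) + 1`. -/
theorem stmt_3 {V : Type} [Fintype V] (G : SimpleGraph V) (x : V) :
    lettericity (G.induce {y | y ≠ x}) ≤ lettericity G ∧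
    lettericity G ≤ 2 * lettericity (G.induce {y | y ≠ x}) + 1 := by
  constructor
  · obtain ⟨D, ℓ, c, hreal⟩ := lett_mem G
    obtain ⟨c', hc'⟩ := exists_mono_equiv (W := ↥{y : V | y ≠ x})
      (fun u => (c u.1).1) (fun u v h => Subtype.ext (c.injective (Fin.ext h)))
    refine Nat.sInf_le ⟨D, fun u => ℓ u.1, c', fun u v huv => ?_⟩
    have hne : u.1 ≠ v.1 := fun h => huv (Subtype.ext h)
    have hiff : (G.induce {y | y ≠ x}).Adj u v ↔ G.Adj u.1 v.1 := by
      simp [SimpleGraph.comap_adj]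
    rw [hiff, hreal u.1 v.1 hne]
    constructor
    · rintro (⟨hD, hlt⟩ | ⟨hD, hlt⟩)
      · exact Or.inl ⟨hD, (hc' u v).2 hlt⟩
      · exact Or.inr ⟨hD, (hc' v u).2 hlt⟩
    · rintro (⟨hD, hlt⟩ | ⟨hD, hlt⟩)
      · exact Or.inl ⟨hD, (hc' u v).1 hlt⟩
      · exact Or.inr ⟨hD, (hc' v u).1 hlt⟩
  · obtain ⟨D, ℓ, c, hreal⟩ := lett_mem (G.induce {y | y ≠ x})
    obtain ⟨D', ℓ', c', hreal'⟩ := part2 G x _ D ℓ c hreal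
    exact Nat.sInf_le ⟨D', ℓ', c', hreal'⟩
end

section
/- Let (ℓ, c) be a letter realisation of an n-vertex graph G over a decoder whose alphabet has exactly k letters. Then for every 1 ≤ i ≤ n − 1, the cut-rank of the set of the first i vertices satisfies cutrk_G(c⁻¹({1, …, i})) ≤ k. -/
open scoped Classical

/-- The cut-rank of a vertex subset `X`: the GF(2)-rank of the submatrix of the
adjacency matrix with rows indexed by `X` and columns by its complement. -/
noncomputable def cutRank {V : Type} [Fintype V] (G : SimpleGraph V) (X : Set V) : ℕ :=
  Matrix.rank (Matrix.of fun (x : X) (y : ↥Xᶜ) => if G.Adj x.1 y.1 then (1 : ZMod 2) else 0)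

lemma rank_mul_le_card_middle {m n α R : Type} [Fintype n] [Fintype α]
    [Field R] (A : Matrix m α R) (B : Matrix α n R) :
    (A * B).rank ≤ Fintype.card α :=
  le_trans (Matrix.rank_mul_le_right A B) (Matrix.rank_le_card_height B)

set_option maxHeartbeats 1000000 in
/-- for a letter realisation over an alphabet with exactly `k`
letters, every cut along the ordering (the first `i` vertices, `1 ≤ i ≤ n-1`)
has cut-rank at most `k`. -/
theorem stmt_5 {V α : Type} [Fintype V] [Fintype α] (G : SimpleGraph V) (k : ℕ)
    (hk : Fintype.card α = k) (D : α → α → Prop) (ℓ : V → α)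
    (c : V ≃ Fin (Fintype.card V)) (h : IsLetterRealisation G D ℓ c) :
    ∀ i : ℕ, 1 ≤ i → i ≤ Fintype.card V - 1 →
      cutRank G {x : V | (c x : ℕ) < i} ≤ k := by
  intro i _ _
  set X : Set V := {x : V | (c x : ℕ) < i} with hX
  have key : (Matrix.of fun (x : X) (y : ↥Xᶜ) => if G.Adj x.1 y.1 then (1 : ZMod 2) else 0)
      = (Matrix.of fun (x : X) (a : α) => if ℓ x.1 = a then (1 : ZMod 2) else 0) *
        (Matrix.of fun (a : α) (y : ↥Xᶜ) => if D a (ℓ y.1) then (1 : ZMod 2) else 0) := by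
    ext x y
    have hx : (c x.1 : ℕ) < i := x.2
    have hy : ¬ (c y.1 : ℕ) < i := y.2
    have hlt : c x.1 < c y.1 := by
      rw [Fin.lt_def]
      exact Nat.lt_of_lt_of_le hx (Nat.le_of_not_lt hy)
    have hne : x.1 ≠ y.1 := by
      intro hxy
      rw [hxy] at hlt
      exact lt_irrefl _ hlt
    have hadj : G.Adj x.1 y.1 ↔ D (ℓ x.1) (ℓ y.1) := by
      rw [h x.1 y.1 hne]
      constructor
      · rintro (⟨hd, _⟩ | ⟨_, hlt'⟩)
        · exact hd
        · exact absurd hlt' (not_lt.2 hlt.le)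
      · exact fun hd => Or.inl ⟨hd, hlt⟩
    simp only [Matrix.mul_apply, Matrix.of_apply, hadj]
    rw [Finset.sum_eq_single (ℓ x.1)]
    · simp
    · intro b _ hb
      simp [Ne.symm hb]
    · simp
  unfold cutRank
  rw [key]
  rw [← hk]
  convert rank_mul_le_card_middle (Matrix.of fun (x : X) (a : α) => if ℓ x.1 = a then (1 : ZMod 2) else 0) (Matrix.of fun (a : α) (y : ↥Xᶜ) => if D a (ℓ y.1) then (1 : ZMod 2) else 0) using 2
end

section
/- Let D = (Σ, A) be a decoder with |Σ| = k. A graph G = (V, E) admits a letter realisation over D if and only if there exists a letter assignment ℓ : V → Σ satisfying conditions (C1), (C2), (C3) and (C4). -/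
open scoped Classical

/-- The compatibility graph `CG(G, D, ℓ)`: for letters `a, b` with `(a,b) ∈ D` and
`(b,a) ∉ D`, there is an arc `(x, y)` whenever `ℓ x = a`, `ℓ y = b`, `xy ∈ E`, and an
arc `(y, x)` whenever `ℓ x = a`, `ℓ y = b`, `xy ∉ E`. -/
def CompatArc {V α : Type} (G : SimpleGraph V) (D : α → α → Prop) (ℓ : V → α)
    (u v : V) : Prop :=
  (D (ℓ u) (ℓ v) ∧ ¬ D (ℓ v) (ℓ u) ∧ G.Adj u v) ∨
  (D (ℓ v) (ℓ u) ∧ ¬ D (ℓ u) (ℓ v) ∧ u ≠ v ∧ ¬ G.Adj u v)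

/-- Conditions (C1)-(C4) for a letter assignment `ℓ` w.r.t. the decoder `D`:
(C1) each `ℓ⁻¹(a)` with at least two elements is a clique iff `(a,a) ∈ D`;
(C2) each `ℓ⁻¹(a)` with at least two elements is independent iff `(a,a) ∉ D`;
(C3) if both `(a,b), (b,a) ∈ D` (resp. both `∉ D`), the bipartite graph between
`ℓ⁻¹(a)` and `ℓ⁻¹(b)` is complete (resp. edgeless);
(C4) the compatibility graph is acyclic (no directed circuit). -/
def SatisfiesC {V α : Type} (G : SimpleGraph V) (D : α → α → Prop) (ℓ : V → α) : Prop :=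
  (∀ a : α, ({v | ℓ v = a} : Set V).Nontrivial →
    (G.IsClique {v | ℓ v = a} ↔ D a a)) ∧
  (∀ a : α, ({v | ℓ v = a} : Set V).Nontrivial →
    (({v | ℓ v = a} : Set V).Pairwise (fun u v => ¬ G.Adj u v) ↔ ¬ D a a)) ∧
  (∀ a b : α,
    (D a b → D b a → ∀ u v : V, ℓ u = a → ℓ v = b → u ≠ v → G.Adj u v) ∧
    (¬ D a b → ¬ D b a → ∀ u v : V, ℓ u = a → ℓ v = b → ¬ G.Adj u v)) ∧
  (∀ x : V, ¬ Relation.TransGen (CompatArc G D ℓ) x x)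

/-!
A realisation `(ℓ, c)` is governed by two kinds of pairs of distinct vertices. If the letters of
`x` and `y` are joined by arcs in both directions or in neither, the adjacency of `x` and `y` is
forced, whatever `c` is; this is (C3), and (C1), (C2) are its case of equal letters. If exactly
one arc `(ℓ x, ℓ y)` is present, then `xy ∈ E` iff `c x < c y`, which says precisely that `c`
increases along the arcs of the compatibility graph. So for a fixed `ℓ` satisfying (C3) the
admissible orderings `c` are the linear extensions of the compatibility graph, and by
Szpilrajn's theorem these exist iff it is acyclic, which is (C4).
-/

theorem exists_equiv_fin_lt_of_isStrictOrder {V : Type*} [Fintype V] (r : V → V → Prop)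
    [IsStrictOrder V r] : ∃ c : V ≃ Fin (Fintype.card V), ∀ u v, r u v → c u < c v := by
  let _ : PartialOrder V := partialOrderOfSO r
  let _ : Fintype (LinearExtension V) := ‹Fintype V›
  let e : LinearExtension V ≃o Fin (Fintype.card V) := (monoEquivOfFin _ rfl).symm
  -- the strict order of `partialOrderOfSO r` is `r` itself
  refine ⟨e.toEquiv, fun u v (huv : u < v) => e.strictMono ?_⟩
  exact (toLinearExtension.monotone huv.le).lt_of_ne huv.ne

theorem exists_equiv_fin_lt_iff_acyclic {V : Type*} [Fintype V] {r : V → V → Prop} :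
    (∃ c : V ≃ Fin (Fintype.card V), ∀ u v, r u v → c u < c v) ↔
      ∀ x, ¬ Relation.TransGen r x x := by
  constructor
  · rintro ⟨c, hc⟩ x hx
    have hlt := Relation.TransGen.lift c hc x x hx
    rw [Relation.transGen_eq_self] at hlt
    exact lt_irrefl _ hlt
  · intro hacyclic
    have : IsStrictOrder V (Relation.TransGen r) := { irrefl := hacyclic }
    obtain ⟨c, hc⟩ := exists_equiv_fin_lt_of_isStrictOrder (Relation.TransGen r)
    exact ⟨c, fun u v huv => hc u v (.single huv)⟩

theorem Set.Nontrivial.pairwise_iff_of_forall_ne {β : Type*} {s : Set β} {R : β → β → Prop}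
    {p : Prop} (hs : s.Nontrivial) (h : ∀ x ∈ s, ∀ y ∈ s, x ≠ y → (R x y ↔ p)) :
    s.Pairwise R ↔ p := by
  obtain ⟨x, hx, y, hy, hxy⟩ := hs
  exact ⟨fun hR => (h x hx y hy hxy).1 (hR hx hy hxy),
    fun hp u hu v hv huv => (h u hu v hv huv).2 hp⟩

section LetterRealisation

variable {V α : Type} (G : SimpleGraph V) (D : α → α → Prop) (ℓ : V → α)

def SymmetricLettersDecideAdj : Prop :=
  ∀ x y, x ≠ y → (D (ℓ x) (ℓ y) ↔ D (ℓ y) (ℓ x)) → (G.Adj x y ↔ D (ℓ x) (ℓ y))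

variable {G D ℓ}

theorem adj_iff_lt_of_compatArc {β : Type*} [LinearOrder β] {c : V → β}
    (hc : ∀ u v, CompatArc G D ℓ u v → c u < c v) {x y : V} (hxy : x ≠ y)
    (hab : D (ℓ x) (ℓ y)) (hba : ¬ D (ℓ y) (ℓ x)) : G.Adj x y ↔ c x < c y := by
  refine ⟨fun hadj => hc x y (.inl ⟨hab, hba, hadj⟩), fun hlt => ?_⟩
  by_contra hnadj
  exact lt_asymm hlt (hc y x (.inr ⟨hab, hba, hxy.symm, fun h => hnadj h.symm⟩))

theorem isLetterRealisation_iff [Fintype V] {c : V ≃ Fin (Fintype.card V)} :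
    IsLetterRealisation G D ℓ c ↔
      SymmetricLettersDecideAdj G D ℓ ∧ ∀ u v, CompatArc G D ℓ u v → c u < c v := by
  constructor
  · intro h
    refine ⟨fun x y hxy hsym => ?_, ?_⟩
    · have := c.injective.ne hxy
      rw [h x y hxy]
      grind
    · rintro u v (⟨hab, hba, hadj⟩ | ⟨hba, hab, huv, hnadj⟩)
      · grind [h u v hadj.ne]
      · have := c.injective.ne huv
        grind [h u v huv]
  · rintro ⟨hsym, hc⟩ x y hxy
    have := c.injective.ne hxy
    by_cases hab : D (ℓ x) (ℓ y) <;> by_cases hba : D (ℓ y) (ℓ x)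
    · grind [hsym x y hxy (iff_of_true hab hba)]
    · grind [adj_iff_lt_of_compatArc hc hxy hab hba]
    · grind [adj_iff_lt_of_compatArc hc hxy.symm hba hab, G.adj_comm]
    · grind [hsym x y hxy (iff_of_false hab hba)]

theorem satisfiesC_iff :
    SatisfiesC G D ℓ ↔
      SymmetricLettersDecideAdj G D ℓ ∧ ∀ x, ¬ Relation.TransGen (CompatArc G D ℓ) x x := by
  constructor
  · rintro ⟨-, -, hC3, hC4⟩
    refine ⟨fun x y hxy hsym => ?_, hC4⟩
    by_cases hab : D (ℓ x) (ℓ y)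
    · exact iff_of_true ((hC3 _ _).1 hab (hsym.1 hab) x y rfl rfl hxy) hab
    · exact iff_of_false ((hC3 _ _).2 hab (mt hsym.2 hab) x y rfl rfl) hab
  · rintro ⟨hsym, hC4⟩
    have hfiber : ∀ a, ∀ x ∈ {v | ℓ v = a}, ∀ y ∈ {v | ℓ v = a}, x ≠ y → (G.Adj x y ↔ D a a) := by
      rintro a x rfl y (hy : ℓ y = ℓ x) hxy
      simpa only [hy] using hsym x y hxy (by rw [hy])
    refine ⟨fun a ha => ha.pairwise_iff_of_forall_ne (hfiber a),
      fun a ha => ha.pairwise_iff_of_forall_ne fun x hx y hy hxy =>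
        not_congr (hfiber a x hx y hy hxy),
      fun a b => ⟨?_, ?_⟩, hC4⟩
    · rintro hab hba u v rfl rfl huv
      exact (hsym u v huv (iff_of_true hab hba)).2 hab
    · rintro hab hba u v rfl rfl hadj
      exact hab ((hsym u v hadj.ne (iff_of_false hab hba)).1 hadj)

end LetterRealisation

theorem stmt_7_general {V α : Type} [Fintype V] (G : SimpleGraph V) (D : α → α → Prop) :
    (∃ (ℓ : V → α) (c : V ≃ Fin (Fintype.card V)), IsLetterRealisation G D ℓ c) ↔
    (∃ ℓ : V → α, SatisfiesC G D ℓ) := by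
  simp only [isLetterRealisation_iff, satisfiesC_iff, exists_and_left,
    exists_equiv_fin_lt_iff_acyclic]

/-- `G` admits a letter realisation over the decoder `D` (whose
alphabet has `k` letters) iff there is a letter assignment `ℓ` satisfying
(C1)-(C4). -/
theorem stmt_7 {V α : Type} [Fintype V] [Fintype α] (G : SimpleGraph V) (k : ℕ)
    (hk : Fintype.card α = k) (D : α → α → Prop) :
    (∃ (ℓ : V → α) (c : V ≃ Fin (Fintype.card V)), IsLetterRealisation G D ℓ c) ↔
    (∃ ℓ : V → α, SatisfiesC G D ℓ) :=
  stmt_7_general G D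
end

section
/- Let D = (Σ, A) be a decoder, G = (V, E) a graph, and ℓ : V → Σ a letter assignment satisfying conditions (C1), (C2), (C3) and (C4). Then for every topological ordering π of the compatibility graph CG(G, D, ℓ) (i.e., every bijection π : V → {1, …, n} with π(x) < π(y) for every arc (x, y) of CG(G, D, ℓ)), the pair (ℓ, π) is a letter realisation of G over D. -/
open scoped Classical

/-- if `ℓ` satisfies (C1)-(C4), then for every topological ordering
`π` of the compatibility graph, the pair `(ℓ, π)` is a letter realisation of `G`
over `D`. -/
theorem stmt_8 {V α : Type} [Fintype V] [Fintype α] (G : SimpleGraph V)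
    (D : α → α → Prop) (ℓ : V → α) (hC : SatisfiesC G D ℓ)
    (π : V ≃ Fin (Fintype.card V))
    (hπ : ∀ u v : V, CompatArc G D ℓ u v → π u < π v) :
    IsLetterRealisation G D ℓ π := by
  obtain ⟨-, -, hC3, -⟩ := hC
  intro x y hxy
  have hne : π x ≠ π y := fun h => hxy (π.injective h)
  by_cases h1 : D (ℓ x) (ℓ y) <;> by_cases h2 : D (ℓ y) (ℓ x)
  · constructor
    · intro _
      rcases lt_or_gt_of_ne hne with h | h
      · exact Or.inl ⟨h1, h⟩
      · exact Or.inr ⟨h2, h⟩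
    · intro _
      exact (hC3 (ℓ x) (ℓ y)).1 h1 h2 x y rfl rfl hxy
  · have harc : G.Adj x y → π x < π y := fun h => hπ x y (Or.inl ⟨h1, h2, h⟩)
    have harc' : ¬ G.Adj x y → π y < π x :=
      fun h => hπ y x (Or.inr ⟨h1, h2, hxy.symm, fun h' => h h'.symm⟩)
    constructor
    · intro h; exact Or.inl ⟨h1, harc h⟩
    · rintro (⟨-, hlt⟩ | ⟨hD, -⟩)
      · by_contra h; exact absurd hlt (harc' h).asymm
      · exact absurd hD h2
  · have harc : G.Adj x y → π y < π x := fun h => hπ y x (Or.inl ⟨h2, h1, h.symm⟩)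
    have harc' : ¬ G.Adj x y → π x < π y :=
      fun h => hπ x y (Or.inr ⟨h2, h1, hxy, h⟩)
    constructor
    · intro h; exact Or.inr ⟨h2, harc h⟩
    · rintro (⟨hD, -⟩ | ⟨-, hlt⟩)
      · exact absurd hD h1
      · by_contra h; exact absurd hlt (harc' h).asymm
  · constructor
    · intro h
      exact absurd h ((hC3 (ℓ x) (ℓ y)).2 h1 h2 x y rfl rfl)
    · rintro (⟨hD, -⟩ | ⟨hD, -⟩)
      · exact absurd hD h1
      · exact absurd hD h2
end

section
/- If a letter realisation (ℓ, c) of a graph G over a decoder D = (Σ, A) exists, then the compatibility graph CG(G, D, ℓ) contains no directed circuit; moreover, every arc (x, y) of CG(G, D, ℓ) satisfies c(x) < c(y). -/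
open scoped Classical

/-- if `(ℓ, c)` is a letter realisation of `G` over `D`, then every
arc `(x, y)` of the compatibility graph satisfies `c x < c y`, and the
compatibility graph contains no directed circuit. -/
theorem stmt_9 {V α : Type} [Fintype V] [Fintype α] (G : SimpleGraph V)
    (D : α → α → Prop) (ℓ : V → α) (c : V ≃ Fin (Fintype.card V))
    (h : IsLetterRealisation G D ℓ c) :
    (∀ u v : V, CompatArc G D ℓ u v → c u < c v) ∧
    (∀ x : V, ¬ Relation.TransGen (CompatArc G D ℓ) x x) := by
  have key : ∀ u v : V, CompatArc G D ℓ u v → c u < c v := by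
    intro u v harc
    rcases harc with ⟨hD, hnD, hadj⟩ | ⟨hD, hnD, hne, hnadj⟩
    · rcases (h u v hadj.ne).mp hadj with ⟨_, hlt⟩ | ⟨hD', _⟩
      · exact hlt
      · exact absurd hD' hnD
    · have hiff := h u v hne
      have hnot : ¬ ((D (ℓ u) (ℓ v) ∧ c u < c v) ∨ (D (ℓ v) (ℓ u) ∧ c v < c u)) :=
        fun hc => hnadj (hiff.mpr hc)
      push_neg at hnot
      have h2 := hnot.2 hD
      have hcne : c u ≠ c v := fun he => hne (c.injective he)
      omega
  refine ⟨key, fun x hx => ?_⟩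
  have mono : ∀ y : V, Relation.TransGen (CompatArc G D ℓ) x y → c x < c y := by
    intro y hy
    induction hy with
    | single h1 => exact key _ _ h1
    | tail _ h1 ih => exact ih.trans (key _ _ h1)
  exact lt_irrefl _ (mono x hx)
end

section
/- Let (ℓ, c) be a letter realisation of a graph G over a decoder D = (Σ, A), and let a, b ∈ Σ be two distinct letters that interlace in the word w(ℓ, c). Let A₀ = ℓ⁻¹(a) and B₀ = ℓ⁻¹(b). Then a and b are independent in D if and only if the bipartite graph G[A₀, B₀] between A₀ and B₀ is homogeneous (complete bipartite or edgeless). -/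
open scoped Classical

theorem List.exists_lt_of_pair_sublist_ofFn {α : Type} {n : ℕ} {f : Fin n → α} {p q : α}
    (hs : [p, q].Sublist (List.ofFn f)) : ∃ i j, i < j ∧ f i = p ∧ f j = q := by
  obtain ⟨e, he⟩ := List.sublist_iff_exists_fin_orderEmbedding_get_eq.mp hs
  simp only [List.get_ofFn] at he
  exact ⟨_, _, e.strictMono (show (0 : Fin 2) < 1 by decide), (he 0).symm, (he 1).symm⟩

namespace IsLetterRealisation

variable {V α : Type} [Fintype V] {G : SimpleGraph V} {D : α → α → Prop} {ℓ : V → α}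
  {c : V ≃ Fin (Fintype.card V)} {a b : α} {u v : V}

theorem exists_lt_of_pair_sublist {p q : α}
    (hs : [p, q].Sublist (List.ofFn fun i => ℓ (c.symm i))) :
    ∃ x y, ℓ x = p ∧ ℓ y = q ∧ c x < c y := by
  obtain ⟨i, j, hij, hi, hj⟩ := List.exists_lt_of_pair_sublist_ofFn hs
  exact ⟨c.symm i, c.symm j, hi, hj, by simpa using hij⟩

theorem adj_iff_of_lt (h : IsLetterRealisation G D ℓ c) (hu : ℓ u = a) (hv : ℓ v = b)
    (huv : c u < c v) : G.Adj u v ↔ D a b := by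
  rw [h u v (ne_of_apply_ne c huv.ne), hu, hv]
  simp [huv, huv.not_gt]

theorem adj_iff_of_gt (h : IsLetterRealisation G D ℓ c) (hu : ℓ u = a) (hv : ℓ v = b)
    (hvu : c v < c u) : G.Adj u v ↔ D b a := by
  rw [G.adj_comm]
  exact h.adj_iff_of_lt hv hu hvu

theorem iff_homogeneous_of_both_orders (h : IsLetterRealisation G D ℓ c) (hab : a ≠ b)
    (hab_order : ∃ x y, ℓ x = a ∧ ℓ y = b ∧ c x < c y)
    (hba_order : ∃ x y, ℓ x = b ∧ ℓ y = a ∧ c x < c y) :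
    ((D a b ↔ D b a) ↔
      ((∀ u v : V, ℓ u = a → ℓ v = b → G.Adj u v) ∨
       (∀ u v : V, ℓ u = a → ℓ v = b → ¬ G.Adj u v))) := by
  constructor
  · intro hindep
    have hadj : ∀ u v, ℓ u = a → ℓ v = b → (G.Adj u v ↔ D a b) := by
      intro u v hu hv
      have huv : c u ≠ c v := c.injective.ne fun huv => hab (hu ▸ hv ▸ congrArg ℓ huv)
      rcases huv.lt_or_gt with huv | hvu
      · exact h.adj_iff_of_lt hu hv huv
      · exact (h.adj_iff_of_gt hu hv hvu).trans hindep.symm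
    by_cases hD : D a b
    · exact Or.inl fun u v hu hv => (hadj u v hu hv).mpr hD
    · exact Or.inr fun u v hu hv => (hD <| (hadj u v hu hv).mp ·)
  · obtain ⟨x₁, y₁, hx₁, hy₁, hxy⟩ := hab_order
    obtain ⟨y₂, x₂, hy₂, hx₂, hyx⟩ := hba_order
    rw [← h.adj_iff_of_lt hx₁ hy₁ hxy, ← h.adj_iff_of_gt hx₂ hy₂ hyx]
    rintro (hcomplete | hempty)
    · exact iff_of_true (hcomplete _ _ hx₁ hy₁) (hcomplete _ _ hx₂ hy₂)
    · exact iff_of_false (hempty _ _ hx₁ hy₁) (hempty _ _ hx₂ hy₂)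

end IsLetterRealisation

theorem stmt_11_general {V α : Type} [Fintype V] (G : SimpleGraph V)
    (D : α → α → Prop) (ℓ : V → α) (c : V ≃ Fin (Fintype.card V))
    (h : IsLetterRealisation G D ℓ c) (a b : α) (hab : a ≠ b)
    (hinter : [a, b, a, b].Sublist (List.ofFn fun i => ℓ (c.symm i)) ∨
      [b, a, b, a].Sublist (List.ofFn fun i => ℓ (c.symm i))) :
    ((D a b ↔ D b a) ↔
      ((∀ u v : V, ℓ u = a → ℓ v = b → G.Adj u v) ∨
       (∀ u v : V, ℓ u = a → ℓ v = b → ¬ G.Adj u v))) := by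
  set w := List.ofFn fun i => ℓ (c.symm i)
  have hboth : [a, b].Sublist w ∧ [b, a].Sublist w := by
    rcases hinter with hs | hs <;> exact ⟨.trans (by simp) hs, .trans (by simp) hs⟩
  exact h.iff_homogeneous_of_both_orders hab
    (IsLetterRealisation.exists_lt_of_pair_sublist hboth.1)
    (IsLetterRealisation.exists_lt_of_pair_sublist hboth.2)

/-- if distinct letters `a, b` interlace in `w(ℓ, c)` (i.e. `abab`
or `baba` occurs as a subword), then `a` and `b` are independent in `D` (not
exactly one of `(a,b), (b,a)` is an arc) iff the bipartite graph between
`ℓ⁻¹(a)` and `ℓ⁻¹(b)` is homogeneous (complete bipartite or edgeless). -/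
theorem stmt_11 {V α : Type} [Fintype V] [Fintype α] (G : SimpleGraph V)
    (D : α → α → Prop) (ℓ : V → α) (c : V ≃ Fin (Fintype.card V))
    (h : IsLetterRealisation G D ℓ c) (a b : α) (hab : a ≠ b)
    (hinter : [a, b, a, b].Sublist (List.ofFn fun i => ℓ (c.symm i)) ∨
      [b, a, b, a].Sublist (List.ofFn fun i => ℓ (c.symm i))) :
    ((D a b ↔ D b a) ↔
      ((∀ u v : V, ℓ u = a → ℓ v = b → G.Adj u v) ∨
       (∀ u v : V, ℓ u = a → ℓ v = b → ¬ G.Adj u v))) :=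
  stmt_11_general G D ℓ c h a b hab hinter
end

section
/- Let G be a critical k-letter graph and let (ℓ, c) be a k-letter realisation of G over a decoder with alphabet of size at most k. Then every factor of the word w(ℓ, c) in which only one distinct letter appears has length at most 3. -/
open scoped Classical

/-- `G` is a critical `k`-letter graph: `lett(G) = k` and every proper induced
subgraph has lettericity strictly less than `k`. -/
def IsCriticalKLetterGraph {V : Type} [Fintype V] (G : SimpleGraph V) (k : ℕ) : Prop :=
  lettericity G = k ∧ ∀ S : Set V, S ≠ Set.univ → lettericity (G.induce S) < k

/-- The word `w(ℓ, c)` of a letter realisation: its `i`-th letter is `ℓ (c⁻¹ i)`. -/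
def wordOf {V α : Type} [Fintype V] (ℓ : V → α) (c : V ≃ Fin (Fintype.card V)) :
    Fin (Fintype.card V) → α := fun i => ℓ (c.symm i)

/-- The set of distinct letters appearing in the factor of `w` occupying the
positions `j, j+1, …, j+len-1`. -/
noncomputable def factorLetters {α : Type} {n : ℕ} (w : Fin n → α) (j len : ℕ) :
    Finset α :=
  (Finset.univ.filter fun i : Fin n => j ≤ (i : ℕ) ∧ (i : ℕ) < j + len).image w

lemma exists_real {W : Type} [Fintype W] (G : SimpleGraph W) :
    ∃ (D : Fin (Fintype.card W) → Fin (Fintype.card W) → Prop)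
      (ℓ : W → Fin (Fintype.card W)) (c : W ≃ Fin (Fintype.card W)),
      IsLetterRealisation G D ℓ c := by
  refine ⟨fun a b => G.Adj ((Fintype.equivFin W).symm a) ((Fintype.equivFin W).symm b),
    fun v => Fintype.equivFin W v, Fintype.equivFin W, ?_⟩
  intro x y hxy
  simp only [Equiv.symm_apply_apply]
  constructor
  · intro hadj
    rcases lt_trichotomy (Fintype.equivFin W x) (Fintype.equivFin W y) with hl | he | hg
    · exact Or.inl ⟨hadj, hl⟩
    · exact absurd (Equiv.injective _ he) hxy
    · exact Or.inr ⟨hadj.symm, hg⟩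
  · rintro (⟨ha, _⟩ | ⟨ha, _⟩)
    · exact ha
    · exact ha.symm

lemma lett_real {W : Type} [Fintype W] (H : SimpleGraph W) :
    ∃ (D : Fin (lettericity H) → Fin (lettericity H) → Prop)
      (ℓ : W → Fin (lettericity H)) (c : W ≃ Fin (Fintype.card W)),
      IsLetterRealisation H D ℓ c := by
  have hne : {k | ∃ (D : Fin k → Fin k → Prop) (ℓ : W → Fin k)
      (c : W ≃ Fin (Fintype.card W)), IsLetterRealisation H D ℓ c}.Nonempty :=
    ⟨Fintype.card W, exists_real H⟩
  exact Nat.sInf_mem hne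

lemma lett_le {W : Type} [Fintype W] (H : SimpleGraph W) {m : ℕ}
    (hex : ∃ (D : Fin m → Fin m → Prop) (ℓ : W → Fin m)
      (c : W ≃ Fin (Fintype.card W)), IsLetterRealisation H D ℓ c) :
    lettericity H ≤ m :=
  Nat.sInf_le hex

lemma median3 {β γ : Type} [LinearOrder β] (f : γ → β) (a b c : γ)
    (hab : f a ≠ f b) (hac : f a ≠ f c) (hbc : f b ≠ f c) :
    ∃ u md w : γ, (∀ z : γ, (z = u ∨ z = md ∨ z = w) ↔ (z = a ∨ z = b ∨ z = c)) ∧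
      f u < f md ∧ f md < f w := by
  rcases hab.lt_or_gt with h1 | h1 <;> rcases hac.lt_or_gt with h2 | h2 <;>
    rcases hbc.lt_or_gt with h3 | h3
  · exact ⟨a, b, c, fun z => by tauto, h1, h3⟩
  · exact ⟨a, c, b, fun z => by tauto, h2, h3⟩
  · exact absurd (h2.trans (h1.trans h3)) (lt_irrefl _)
  · exact ⟨c, a, b, fun z => by tauto, h2, h1⟩
  · exact ⟨b, a, c, fun z => by tauto, h1, h2⟩
  · exact absurd (h2.trans (h3.trans h1)) (lt_irrefl _)
  · exact ⟨b, c, a, fun z => by tauto, h3, h2⟩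
  · exact ⟨c, b, a, fun z => by tauto, h3, h1⟩

lemma insert_twin {V : Type} [Fintype V] (G : SimpleGraph V) (v2 t1 t2 t3 : V) (d : Prop)
    (S : Set V) (hS : ∀ x : V, x ∈ S ↔ x ≠ v2)
    (hd1 : t1 ≠ v2) (hd2 : t2 ≠ v2) (hd3 : t3 ≠ v2)
    (ht12 : t1 ≠ t2) (ht13 : t1 ≠ t3) (ht23 : t2 ≠ t3)
    (hadj : ∀ x ∈ ({v2, t1, t2, t3} : Set V), ∀ y ∈ ({v2, t1, t2, t3} : Set V),
      x ≠ y → (G.Adj x y ↔ d))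
    (htwin : ∀ x ∉ ({v2, t1, t2, t3} : Set V), ∀ y ∈ ({v2, t1, t2, t3} : Set V),
      ∀ z ∈ ({v2, t1, t2, t3} : Set V), (G.Adj y x ↔ G.Adj z x)) :
    lettericity G ≤ lettericity (G.induce S) := by
  classical
  obtain ⟨D₁, ℓ₁, c₁, hreal⟩ := lett_real (G.induce S)
  apply lett_le
  have hneq_v2 : ∀ z : ↥S, (z : V) ≠ v2 := fun z => (hS z).1 z.2
  have hv2S : v2 ∉ S := fun h => (hS v2).1 h rfl
  have hv2T : v2 ∈ ({v2, t1, t2, t3} : Set V) := by simp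
  have hmemT : ∀ z : ↥S, ((z : V) = t1 ∨ (z : V) = t2 ∨ (z : V) = t3) →
      (z : V) ∈ ({v2, t1, t2, t3} : Set V) := by
    intro z hz
    simp only [Set.mem_insert_iff, Set.mem_singleton_iff]
    tauto
  have hAdj' : ∀ p q : ↥S, p ≠ q →
      (G.Adj ↑p ↑q ↔ (D₁ (ℓ₁ p) (ℓ₁ q) ∧ c₁ p < c₁ q) ∨ (D₁ (ℓ₁ q) (ℓ₁ p) ∧ c₁ q < c₁ p)) :=
    fun p q h => hreal p q h
  have hcne : ∀ p q : ↥S, p ≠ q → c₁ p ≠ c₁ q :=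
    fun p q h he => h (c₁.injective he)
  have hfwd : ∀ p q : ↥S, c₁ p < c₁ q →
      (G.Adj ↑p ↑q ↔ D₁ (ℓ₁ p) (ℓ₁ q)) := by
    intro p q hlt
    have hne : p ≠ q := fun h => by subst h; exact lt_irrefl _ hlt
    rw [hAdj' p q hne]
    have h2 : ¬ c₁ q < c₁ p := asymm hlt
    tauto
  have hsame : ∀ p q : ↥S, p ≠ q → ℓ₁ p = ℓ₁ q →
      (G.Adj ↑p ↑q ↔ D₁ (ℓ₁ p) (ℓ₁ p)) := by
    intro p q hne hl
    rw [hAdj' p q hne, ← hl]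
    rcases lt_or_gt_of_ne (hcne p q hne) with h | h
    · have := asymm h; tauto
    · have := asymm h; tauto
  have ht1S : t1 ∈ S := (hS t1).2 hd1
  have ht2S : t2 ∈ S := (hS t2).2 hd2
  have ht3S : t3 ∈ S := (hS t3).2 hd3
  obtain ⟨u, md, w, hperm, hum, hmw⟩ :=
    median3 (fun z : ↥S => c₁ z) ⟨t1, ht1S⟩ ⟨t2, ht2S⟩ ⟨t3, ht3S⟩
      (hcne _ _ (fun h => ht12 (congrArg Subtype.val h)))
      (hcne _ _ (fun h => ht13 (congrArg Subtype.val h)))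
      (hcne _ _ (fun h => ht23 (congrArg Subtype.val h)))
  have humem : (u : V) = t1 ∨ (u : V) = t2 ∨ (u : V) = t3 := by
    rcases (hperm u).1 (Or.inl rfl) with h | h | h
    exacts [Or.inl (congrArg Subtype.val h), Or.inr (Or.inl (congrArg Subtype.val h)),
      Or.inr (Or.inr (congrArg Subtype.val h))]
  have hmdmem : (md : V) = t1 ∨ (md : V) = t2 ∨ (md : V) = t3 := by
    rcases (hperm md).1 (Or.inr (Or.inl rfl)) with h | h | h
    exacts [Or.inl (congrArg Subtype.val h), Or.inr (Or.inl (congrArg Subtype.val h)),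
      Or.inr (Or.inr (congrArg Subtype.val h))]
  have hwmem : (w : V) = t1 ∨ (w : V) = t2 ∨ (w : V) = t3 := by
    rcases (hperm w).1 (Or.inr (Or.inr rfl)) with h | h | h
    exacts [Or.inl (congrArg Subtype.val h), Or.inr (Or.inl (congrArg Subtype.val h)),
      Or.inr (Or.inr (congrArg Subtype.val h))]
  have humd : u ≠ md := fun h => absurd (h ▸ hum) (lt_irrefl _)
  have hmdw : md ≠ w := fun h => absurd (h ▸ hmw) (lt_irrefl _)
  have humd' : (u : V) ≠ (md : V) := fun h => humd (Subtype.coe_injective h)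
  have hmdw' : (md : V) ≠ (w : V) := fun h => hmdw (Subtype.coe_injective h)
  have hDum : D₁ (ℓ₁ u) (ℓ₁ md) ↔ d :=
    (hfwd u md hum).symm.trans (hadj _ (hmemT u humem) _ (hmemT md hmdmem) humd')
  have hDmw : D₁ (ℓ₁ md) (ℓ₁ w) ↔ d :=
    (hfwd md w hmw).symm.trans (hadj _ (hmemT md hmdmem) _ (hmemT w hwmem) hmdw')
  have Hd : (D₁ (ℓ₁ md) (ℓ₁ md) ↔ d) ∨
      (∀ x : ↥S, x ≠ md → ℓ₁ x ≠ ℓ₁ md) := by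
    by_cases hc : D₁ (ℓ₁ md) (ℓ₁ md) ↔ d
    · exact Or.inl hc
    right
    intro x hxmd hlx
    have hxu : x ≠ u := by rintro rfl; exact hc (by rwa [hlx] at hDum)
    have hxw : x ≠ w := by rintro rfl; exact hc (by rwa [hlx] at hDmw)
    have hAdjxmd : G.Adj ↑x ↑md ↔ D₁ (ℓ₁ md) (ℓ₁ md) := by
      have := hsame x md hxmd hlx
      rwa [hlx] at this
    have hxT : (x : V) ∉ ({v2, t1, t2, t3} : Set V) := by
      intro hT
      simp only [Set.mem_insert_iff, Set.mem_singleton_iff] at hT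
      rcases hT with h | h | h | h
      · exact hneq_v2 x h
      · rcases (hperm x).2 (Or.inl (Subtype.ext h)) with h' | h' | h'
        exacts [hxu h', hxmd h', hxw h']
      · rcases (hperm x).2 (Or.inr (Or.inl (Subtype.ext h))) with h' | h' | h'
        exacts [hxu h', hxmd h', hxw h']
      · rcases (hperm x).2 (Or.inr (Or.inr (Subtype.ext h))) with h' | h' | h'
        exacts [hxu h', hxmd h', hxw h']
    rcases lt_or_gt_of_ne (hcne x u hxu) with hlt | hgt
    · have h1 : G.Adj ↑x ↑w ↔ d := by
        rw [hfwd x w (hlt.trans (hum.trans hmw)), hlx]; exact hDmw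
      have h2 : G.Adj ↑w ↑x ↔ G.Adj ↑md ↑x :=
        htwin ↑x hxT _ (hmemT w hwmem) _ (hmemT md hmdmem)
      apply hc
      rw [← hAdjxmd, G.adj_comm, ← h2, G.adj_comm]
      exact h1
    · have h1 : G.Adj ↑u ↑x ↔ d := by
        rw [hfwd u x hgt, hlx]; exact hDum
      have h2 : G.Adj ↑u ↑x ↔ G.Adj ↑md ↑x :=
        htwin ↑x hxT _ (hmemT u humem) _ (hmemT md hmdmem)
      apply hc
      rw [← hAdjxmd, G.adj_comm, ← h2]
      exact h1
  have hN : Fintype.card ↥S < Fintype.card V :=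
    Fintype.card_subtype_lt (x := v2) (by simpa using hv2S)
  set f : V → Fin (Fintype.card V) := fun x =>
    if h : x ∈ S then
      (if (c₁ ⟨x, h⟩ : ℕ) ≤ (c₁ md : ℕ) then
        ⟨(c₁ ⟨x, h⟩ : ℕ), lt_trans (Fin.is_lt _) hN⟩
      else ⟨(c₁ ⟨x, h⟩ : ℕ) + 1, Nat.lt_of_le_of_lt (Nat.succ_le_of_lt (Fin.is_lt _)) hN⟩)
    else ⟨(c₁ md : ℕ) + 1, Nat.lt_of_le_of_lt (Nat.succ_le_of_lt (Fin.is_lt _)) hN⟩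
    with hf
  have hfS : ∀ (x : V) (h : x ∈ S),
      (f x : ℕ) = if (c₁ ⟨x, h⟩ : ℕ) ≤ (c₁ md : ℕ) then (c₁ ⟨x, h⟩ : ℕ)
        else (c₁ ⟨x, h⟩ : ℕ) + 1 := by
    intro x h
    simp only [hf, dif_pos h]
    split_ifs <;> rfl
  have hfv2 : (f v2 : ℕ) = (c₁ md : ℕ) + 1 := by
    simp only [hf, dif_neg hv2S]
  have key_lt : ∀ x y : ↥S,
      ((f ↑x : ℕ) < (f ↑y : ℕ) ↔ (c₁ x : ℕ) < (c₁ y : ℕ)) := by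
    intro x y
    rw [hfS ↑x x.2, hfS ↑y y.2]
    simp only [Subtype.coe_eta]
    split_ifs <;> omega
  have key_v2lt : ∀ x : ↥S,
      ((f v2 : ℕ) < (f ↑x : ℕ) ↔ (c₁ md : ℕ) < (c₁ x : ℕ)) := by
    intro x
    rw [hfv2, hfS ↑x x.2]
    simp only [Subtype.coe_eta]
    split_ifs <;> omega
  have key_ltv2 : ∀ x : ↥S, x ≠ md →
      ((f ↑x : ℕ) < (f v2 : ℕ) ↔ (c₁ x : ℕ) < (c₁ md : ℕ)) := by
    intro x hx
    have hne : (c₁ x : ℕ) ≠ (c₁ md : ℕ) := fun h => (hcne x md hx) (Fin.ext h)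
    rw [hfv2, hfS ↑x x.2]
    simp only [Subtype.coe_eta]
    split_ifs <;> omega
  have hfmd : (f ↑md : ℕ) = (c₁ md : ℕ) := by
    rw [hfS ↑md md.2]
    simp only [Subtype.coe_eta]
    rw [if_pos (le_refl _)]
  have hfinj : Function.Injective f := by
    intro x y hxy
    have hval : (f x : ℕ) = (f y : ℕ) := congrArg Fin.val hxy
    by_cases hx : x ∈ S <;> by_cases hy : y ∈ S
    · rw [hfS x hx, hfS y hy] at hval
      have hcc : (c₁ ⟨x, hx⟩ : ℕ) = (c₁ ⟨y, hy⟩ : ℕ) := by split_ifs at hval <;> omega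
      have : (⟨x, hx⟩ : ↥S) = ⟨y, hy⟩ := c₁.injective (Fin.ext hcc)
      exact congrArg Subtype.val this
    · have hy' : y = v2 := not_not.1 fun h => hy ((hS y).2 h)
      subst hy'
      rw [hfS x hx, hfv2] at hval
      split_ifs at hval <;> omega
    · have hx' : x = v2 := not_not.1 fun h => hx ((hS x).2 h)
      subst hx'
      rw [hfS y hy, hfv2] at hval
      split_ifs at hval <;> omega
    · have hx' : x = v2 := not_not.1 fun h => hx ((hS x).2 h)
      have hy' : y = v2 := not_not.1 fun h => hy ((hS y).2 h)
      rw [hx', hy']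
  have hbij : Function.Bijective f :=
    (Fintype.bijective_iff_injective_and_card f).2 ⟨hfinj, (Fintype.card_fin _).symm⟩
  set c' : V ≃ Fin (Fintype.card V) := Equiv.ofBijective f hbij with hc'
  have happ : ∀ x : V, c' x = f x := fun x => rfl
  set ℓ' : V → Fin (lettericity (G.induce S)) := fun x =>
    if h : x ∈ S then ℓ₁ ⟨x, h⟩ else ℓ₁ md with hℓ'
  have hℓ'S : ∀ x : ↥S, ℓ' ↑x = ℓ₁ x := by
    intro x
    simp only [hℓ', dif_pos x.2, Subtype.coe_eta]
  have hℓ'v2 : ℓ' v2 = ℓ₁ md := by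
    simp only [hℓ', dif_neg hv2S]
  set D₂ : Fin (lettericity (G.induce S)) → Fin (lettericity (G.induce S)) → Prop :=
    fun a b => if a = ℓ₁ md ∧ b = ℓ₁ md then d else D₁ a b with hD₂
  have hD₂mm : D₂ (ℓ₁ md) (ℓ₁ md) ↔ d := by
    simp [hD₂]
  have hD₂ne : ∀ a b : Fin (lettericity (G.induce S)), ¬(a = ℓ₁ md ∧ b = ℓ₁ md) → D₂ a b = D₁ a b := by
    intro a b hab
    simp only [hD₂]
    rw [if_neg hab]
  refine ⟨D₂, ℓ', c', ?_⟩
  have main2 : ∀ y : ↥S,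
      (G.Adj v2 ↑y ↔ (D₂ (ℓ' v2) (ℓ' ↑y) ∧ c' v2 < c' ↑y) ∨
        (D₂ (ℓ' ↑y) (ℓ' v2) ∧ c' ↑y < c' v2)) := by
    intro y
    rw [hℓ'v2, hℓ'S y]
    have hA : c' v2 < c' ↑y ↔ (c₁ md : ℕ) < (c₁ y : ℕ) := by
      rw [happ, happ, Fin.lt_def]; exact key_v2lt y
    by_cases hymd : y = md
    · subst hymd
      have hAdjy : G.Adj v2 ↑y ↔ d :=
        hadj v2 hv2T ↑y (hmemT y hmdmem) (Ne.symm (hneq_v2 y))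
      have hB : c' ↑y < c' v2 := by
        rw [happ, happ, Fin.lt_def, hfmd, hfv2]; omega
      have hA' : ¬ (c' v2 < c' ↑y) := by
        rw [hA]; omega
      rw [hAdjy]
      constructor
      · intro hd'
        exact Or.inr ⟨hD₂mm.2 hd', hB⟩
      · rintro (⟨h1, h2⟩ | ⟨h1, _⟩)
        · exact absurd h2 hA'
        · exact hD₂mm.1 h1
    · have hymd' : (y : V) ≠ (md : V) := fun h => hymd (Subtype.ext h)
      have step1 : G.Adj v2 ↑y ↔ G.Adj ↑md ↑y := by
        by_cases hyT : (y : V) ∈ ({v2, t1, t2, t3} : Set V)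
        · rw [hadj v2 hv2T ↑y hyT (Ne.symm (hneq_v2 y)),
            hadj ↑md (hmemT md hmdmem) ↑y hyT (Ne.symm hymd')]
        · exact htwin ↑y hyT v2 hv2T ↑md (hmemT md hmdmem)
      have hmdy : md ≠ y := fun h => hymd h.symm
      rw [step1, hAdj' md y hmdy]
      have hB : c' ↑y < c' v2 ↔ (c₁ y : ℕ) < (c₁ md : ℕ) := by
        rw [happ, happ, Fin.lt_def]; exact key_ltv2 y hymd
      by_cases hby : ℓ₁ y = ℓ₁ md
      · rcases Hd with hl | huniq
        · rw [hby]
          have e : D₂ (ℓ₁ md) (ℓ₁ md) ↔ D₁ (ℓ₁ md) (ℓ₁ md) := hD₂mm.trans hl.symm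
          simp only [e, hA, hB, Fin.lt_def]
        · exact absurd hby (huniq y hymd)
      · have e1 : D₂ (ℓ₁ md) (ℓ₁ y) = D₁ (ℓ₁ md) (ℓ₁ y) :=
          hD₂ne _ _ (fun h => hby h.2)
        have e2 : D₂ (ℓ₁ y) (ℓ₁ md) = D₁ (ℓ₁ y) (ℓ₁ md) :=
          hD₂ne _ _ (fun h => hby h.1)
        rw [e1, e2]
        simp only [hA, hB, Fin.lt_def]
  have main1 : ∀ x y : ↥S, x ≠ y →
      (G.Adj ↑x ↑y ↔ (D₂ (ℓ' ↑x) (ℓ' ↑y) ∧ c' ↑x < c' ↑y) ∨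
        (D₂ (ℓ' ↑y) (ℓ' ↑x) ∧ c' ↑y < c' ↑x)) := by
    intro x y hne
    rw [hℓ'S x, hℓ'S y, hAdj' x y hne]
    have hA : c' ↑x < c' ↑y ↔ (c₁ x : ℕ) < (c₁ y : ℕ) := by
      rw [happ, happ, Fin.lt_def]; exact key_lt x y
    have hB : c' ↑y < c' ↑x ↔ (c₁ y : ℕ) < (c₁ x : ℕ) := by
      rw [happ, happ, Fin.lt_def]; exact key_lt y x
    by_cases hb : ℓ₁ x = ℓ₁ md ∧ ℓ₁ y = ℓ₁ md
    · rcases Hd with hl | huniq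
      · rw [hb.1, hb.2]
        have e : D₂ (ℓ₁ md) (ℓ₁ md) ↔ D₁ (ℓ₁ md) (ℓ₁ md) := hD₂mm.trans hl.symm
        simp only [e, hA, hB, Fin.lt_def]
      · exfalso
        by_cases hxmd : x = md
        · exact huniq y (fun h => hne (hxmd.trans h.symm)) hb.2
        · exact huniq x hxmd hb.1
    · have e1 : D₂ (ℓ₁ x) (ℓ₁ y) = D₁ (ℓ₁ x) (ℓ₁ y) := hD₂ne _ _ hb
      have e2 : D₂ (ℓ₁ y) (ℓ₁ x) = D₁ (ℓ₁ y) (ℓ₁ x) :=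
        hD₂ne _ _ (fun h => hb ⟨h.2, h.1⟩)
      rw [e1, e2]
      simp only [hA, hB, Fin.lt_def]
  intro x y hxy
  by_cases hx : x ∈ S <;> by_cases hy : y ∈ S
  · exact main1 ⟨x, hx⟩ ⟨y, hy⟩ (fun h => hxy (congrArg Subtype.val h))
  · have hy' : y = v2 := not_not.1 fun h => hy ((hS y).2 h)
    subst hy'
    exact (G.adj_comm x y).trans ((main2 ⟨x, hx⟩).trans or_comm)
  · have hx' : x = v2 := not_not.1 fun h => hx ((hS x).2 h)
    subst hx'
    exact main2 ⟨y, hy⟩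
  · exact absurd ((not_not.1 fun h => hx ((hS x).2 h)).trans
      (not_not.1 fun h => hy ((hS y).2 h)).symm) hxy

/-- in any `k`-letter realisation of a critical `k`-letter graph,
every factor of the word `w(ℓ, c)` in which only one distinct letter appears has
length at most 3. -/
theorem stmt_14 {V α : Type} [Fintype V] [Fintype α] (G : SimpleGraph V) (k : ℕ)
    (hG : IsCriticalKLetterGraph G k) (hα : Fintype.card α ≤ k)
    (D : α → α → Prop) (ℓ : V → α) (c : V ≃ Fin (Fintype.card V))
    (h : IsLetterRealisation G D ℓ c)
    (j len : ℕ) (hrange : j + len ≤ Fintype.card V)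
    (hone : (factorLetters (wordOf ℓ c) j len).card = 1) :
    len ≤ 3 := by
  by_contra hlen'
  have hlen : 4 ≤ len := by omega
  obtain ⟨a, ha⟩ := Finset.card_eq_one.1 hone
  -- every letter in the run is a
  have hletter : ∀ i : Fin (Fintype.card V), j ≤ (i : ℕ) → (i : ℕ) < j + len →
      ℓ (c.symm i) = a := by
    intro i h1 h2
    have : wordOf ℓ c i ∈ factorLetters (wordOf ℓ c) j len :=
      Finset.mem_image_of_mem _ (Finset.mem_filter.2 ⟨Finset.mem_univ _, h1, h2⟩)
    rw [ha, Finset.mem_singleton] at this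
    exact this
  -- the four consecutive vertices
  have hn : ∀ i : ℕ, i < 4 → j + i < Fintype.card V := by intro i hi; omega
  set v0 : V := c.symm ⟨j, hn 0 (by omega)⟩ with hv0
  set v1 : V := c.symm ⟨j + 1, hn 1 (by omega)⟩ with hv1
  set v2 : V := c.symm ⟨j + 2, hn 2 (by omega)⟩ with hv2
  set v3 : V := c.symm ⟨j + 3, hn 3 (by omega)⟩ with hv3
  have hc0 : (c v0 : ℕ) = j := by rw [hv0, Equiv.apply_symm_apply]
  have hc1 : (c v1 : ℕ) = j + 1 := by rw [hv1, Equiv.apply_symm_apply]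
  have hc2 : (c v2 : ℕ) = j + 2 := by rw [hv2, Equiv.apply_symm_apply]
  have hc3 : (c v3 : ℕ) = j + 3 := by rw [hv3, Equiv.apply_symm_apply]
  -- they are pairwise distinct
  have hdist : ∀ x y : V, (c x : ℕ) ≠ (c y : ℕ) → x ≠ y := by
    intro x y hne he
    exact hne (by rw [he])
  -- letters
  have hl0 : ℓ v0 = a := hletter ⟨j, hn 0 (by omega)⟩ (by show j ≤ j; omega)
    (by show j < j + len; omega)
  have hl1 : ℓ v1 = a := hletter ⟨j + 1, hn 1 (by omega)⟩ (by show j ≤ j + 1; omega)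
    (by show j + 1 < j + len; omega)
  have hl2 : ℓ v2 = a := hletter ⟨j + 2, hn 2 (by omega)⟩ (by show j ≤ j + 2; omega)
    (by show j + 2 < j + len; omega)
  have hl3 : ℓ v3 = a := hletter ⟨j + 3, hn 3 (by omega)⟩ (by show j ≤ j + 3; omega)
    (by show j + 3 < j + len; omega)
  have hT : ∀ z : V, z ∈ ({v1, v0, v2, v3} : Set V) →
      ℓ z = a ∧ j ≤ (c z : ℕ) ∧ (c z : ℕ) < j + 4 := by
    intro z hz
    simp only [Set.mem_insert_iff, Set.mem_singleton_iff] at hz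
    rcases hz with rfl | rfl | rfl | rfl
    · exact ⟨hl1, by omega⟩
    · exact ⟨hl0, by omega⟩
    · exact ⟨hl2, by omega⟩
    · exact ⟨hl3, by omega⟩
  -- adjacency inside the quadruple
  have hDaa : ∀ x y : V, x ≠ y → ℓ x = a → ℓ y = a → (G.Adj x y ↔ D a a) := by
    intro x y hne hx hy
    rw [h x y hne, hx, hy]
    have hcc : c x ≠ c y := fun he => hne (c.injective he)
    rcases lt_or_gt_of_ne hcc with hlt | hgt
    · have := asymm hlt; tauto
    · have := asymm hgt; tauto
  have hadj : ∀ x ∈ ({v1, v0, v2, v3} : Set V), ∀ y ∈ ({v1, v0, v2, v3} : Set V),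
      x ≠ y → (G.Adj x y ↔ D a a) :=
    fun x hx y hy hne => hDaa x y hne (hT x hx).1 (hT y hy).1
  -- twin property
  have htwin : ∀ x ∉ ({v1, v0, v2, v3} : Set V), ∀ y ∈ ({v1, v0, v2, v3} : Set V),
      ∀ z ∈ ({v1, v0, v2, v3} : Set V), (G.Adj y x ↔ G.Adj z x) := by
    intro x hx y hy z hz
    have hxy : y ≠ x := fun he => hx (he ▸ hy)
    have hxz : z ≠ x := fun he => hx (he ▸ hz)
    by_cases hxa : ℓ x = a
    · rw [hDaa y x hxy (hT y hy).1 hxa, hDaa z x hxz (hT z hz).1 hxa]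
    · have hout : (c x : ℕ) < j ∨ j + len ≤ (c x : ℕ) := by
        by_contra hin
        push_neg at hin
        exact hxa (by simpa using hletter (c x) hin.1 hin.2)
      have hyp := (hT y hy).2
      have hzp := (hT z hz).2
      rcases hout with hsmall | hbig
      · have e1 : G.Adj y x ↔ D (ℓ x) a := by
          rw [h y x hxy, (hT y hy).1]
          constructor
          · rintro (⟨_, hlt⟩ | ⟨hd, _⟩)
            · rw [Fin.lt_def] at hlt; omega
            · exact hd
          · intro hd
            exact Or.inr ⟨hd, by rw [Fin.lt_def]; omega⟩
        have e2 : G.Adj z x ↔ D (ℓ x) a := by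
          rw [h z x hxz, (hT z hz).1]
          constructor
          · rintro (⟨_, hlt⟩ | ⟨hd, _⟩)
            · rw [Fin.lt_def] at hlt; omega
            · exact hd
          · intro hd
            exact Or.inr ⟨hd, by rw [Fin.lt_def]; omega⟩
        rw [e1, e2]
      · have e1 : G.Adj y x ↔ D a (ℓ x) := by
          rw [h y x hxy, (hT y hy).1]
          constructor
          · rintro (⟨hd, _⟩ | ⟨_, hlt⟩)
            · exact hd
            · rw [Fin.lt_def] at hlt; omega
          · intro hd
            exact Or.inl ⟨hd, by rw [Fin.lt_def]; omega⟩
        have e2 : G.Adj z x ↔ D a (ℓ x) := by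
          rw [h z x hxz, (hT z hz).1]
          constructor
          · rintro (⟨hd, _⟩ | ⟨_, hlt⟩)
            · exact hd
            · rw [Fin.lt_def] at hlt; omega
          · intro hd
            exact Or.inl ⟨hd, by rw [Fin.lt_def]; omega⟩
        rw [e1, e2]
  -- distinctness
  have d10 : v1 ≠ v0 := hdist _ _ (by omega)
  have d12 : v1 ≠ v2 := hdist _ _ (by omega)
  have d13 : v1 ≠ v3 := hdist _ _ (by omega)
  have d02 : v0 ≠ v2 := hdist _ _ (by omega)
  have d03 : v0 ≠ v3 := hdist _ _ (by omega)
  have d23 : v2 ≠ v3 := hdist _ _ (by omega)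
  have hSne : ({v1}ᶜ : Set V) ≠ Set.univ := by
    intro hs
    have : v1 ∈ ({v1}ᶜ : Set V) := hs.symm ▸ Set.mem_univ v1
    exact Set.mem_compl_singleton_iff.1 this rfl
  have hcrit := hG.2 ({v1}ᶜ : Set V) hSne
  have hle := insert_twin G v1 v0 v2 v3 (D a a) ({v1}ᶜ : Set V)
    (fun x => Set.mem_compl_singleton_iff) d10.symm d12.symm d13.symm d02 d03 d23
    hadj htwin
  have hk := hG.1
  omega
end

section
/- Let G be a finite graph and A ⊆ V(G). Then the number of equivalence classes of the relation ≡_G^A on subsets of A is at most 2^{cutrk_G(A)²}. -/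
open scoped Classical

/-- The equivalence relation `≡_G^A` on subsets of `A`: `X ≡_G^A Y` iff every
vertex `z ∉ A` has a neighbour in `X` exactly when it has a neighbour in `Y`. -/
def nbrSetoid {V : Type} (G : SimpleGraph V) (A : Set V) : Setoid (Set ↥A) where
  r X Y := ∀ z : V, z ∉ A →
    ((∃ x ∈ X, G.Adj z x.1) ↔ (∃ y ∈ Y, G.Adj z y.1))
  iseqv := ⟨fun X z hz => Iff.rfl,
    fun h z hz => (h z hz).symm,
    fun h1 h2 z hz => (h1 z hz).trans (h2 z hz)⟩

/-!
Let `M` be the `A × Aᶜ` adjacency matrix over GF(2). A vertex `z ∉ A` has a neighbour in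
`X ⊆ A` iff some vector of the span of the rows of `M` indexed by `X` is nonzero at `z`, so
the class of `X` is determined by that span. It is a subspace of the row space of `M`, of
dimension `r = cutrk_G(A)`, and every subspace of `GF(2)^r` is the image of one of the
`2^(r²)` linear maps `GF(2)^r → GF(2)^r`.
-/

open Module

theorem Setoid.natCard_quotient_le {α β : Type*} [Finite β] (s : Setoid α) (f : α → β)
    (h : ∀ a b, f a = f b → s a b) : Nat.card (Quotient s) ≤ Nat.card β :=
  Nat.card_le_card_of_injective (fun q => f q.out) fun q q' hq => by
    rw [← Quotient.out_eq q, ← Quotient.out_eq q']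
    exact Quotient.sound (h _ _ hq)

theorem Submodule.exists_linearMap_range_eq {K W : Type*} [Field K] [AddCommGroup W]
    [Module K W] [FiniteDimensional K W] (S : Submodule K W) :
    ∃ f : (Fin (finrank K W) → K) →ₗ[K] W, LinearMap.range f = S := by
  have hS : finrank K S ≤ finrank K W := S.finrank_le
  let π := LinearMap.funLeft K K (Fin.castLE hS)
  have hπ : Function.Surjective π :=
    LinearMap.funLeft_surjective_of_injective _ _ _ (Fin.castLE_injective hS)
  refine ⟨S.subtype ∘ₗ (finBasis K S).equivFun.symm.toLinearMap ∘ₗ π, ?_⟩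
  rw [LinearMap.range_comp, LinearMap.range_comp, LinearMap.range_eq_top.mpr hπ,
    Submodule.map_top, LinearEquiv.range, Submodule.map_top, Submodule.range_subtype]

theorem Submodule.natCard_le {K W : Type*} [Field K] [Finite K] [AddCommGroup W] [Module K W]
    [FiniteDimensional K W] :
    Nat.card (Submodule K W) ≤ Nat.card K ^ finrank K W ^ 2 := by
  have : Finite ((Fin (finrank K W) → K) →ₗ[K] W) := Module.finite_of_finite K
  calc Nat.card (Submodule K W)
      ≤ Nat.card ((Fin (finrank K W) → K) →ₗ[K] W) :=
        Nat.card_le_card_of_surjective LinearMap.range fun S => S.exists_linearMap_range_eq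
    _ = Nat.card K ^ finrank K W ^ 2 := by
        rw [natCard_eq_pow_finrank (K := K), finrank_linearMap K K, finrank_fin_fun, sq]

namespace SimpleGraph

variable {V : Type} (G : SimpleGraph V) (A : Set V)

noncomputable def cutMatrix : Matrix A ↥Aᶜ (ZMod 2) :=
  Matrix.of fun x y => if G.Adj x.1 y.1 then 1 else 0

def cutRowSpan (X : Set A) : Submodule (ZMod 2) (↥Aᶜ → ZMod 2) :=
  Submodule.span (ZMod 2) ((G.cutMatrix A).row '' X)

variable {G A}

theorem cutRowSpan_mono {X Y : Set A} (h : X ⊆ Y) : G.cutRowSpan A X ≤ G.cutRowSpan A Y :=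
  Submodule.span_mono (Set.image_mono h)

theorem exists_adj_iff_not_cutRowSpan_le_ker (X : Set A) (z : ↥Aᶜ) :
    (∃ x ∈ X, G.Adj z x.1) ↔
      ¬ G.cutRowSpan A X ≤ LinearMap.ker (LinearMap.proj (R := ZMod 2) z) := by
  simp [cutRowSpan, Submodule.span_le, Set.subset_def, cutMatrix, G.adj_comm]

theorem nbrSetoid_rel_of_cutRowSpan_eq {X Y : Set A} (h : G.cutRowSpan A X = G.cutRowSpan A Y) :
    nbrSetoid G A X Y := fun z hz => by
  rw [exists_adj_iff_not_cutRowSpan_le_ker X ⟨z, hz⟩,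
    exists_adj_iff_not_cutRowSpan_le_ker Y ⟨z, hz⟩, h]

theorem finrank_cutRowSpan_univ [Fintype V] :
    finrank (ZMod 2) (G.cutRowSpan A Set.univ) = cutRank G A := by
  rw [cutRank, Matrix.rank_eq_finrank_span_row, cutRowSpan, Set.image_univ]
  rfl

end SimpleGraph

open SimpleGraph in
/-- the number of equivalence classes of `≡_G^A` is at most
`2^(cutrk_G(A)²)`. -/
theorem stmt_19 {V : Type} [Fintype V] (G : SimpleGraph V) (A : Set V) :
    Nat.card (Quotient (nbrSetoid G A)) ≤ 2 ^ (cutRank G A ^ 2) := by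
  set R := G.cutRowSpan A Set.univ
  have map_comap_cutRowSpan (X : Set A) :
      (Submodule.comap R.subtype (G.cutRowSpan A X)).map R.subtype = G.cutRowSpan A X := by
    rw [Submodule.map_comap_subtype, inf_eq_right.mpr (cutRowSpan_mono (Set.subset_univ X))]
  calc Nat.card (Quotient (nbrSetoid G A))
      ≤ Nat.card (Submodule (ZMod 2) R) :=
        Setoid.natCard_quotient_le _ (fun X => (G.cutRowSpan A X).comap R.subtype)
          fun X Y h => nbrSetoid_rel_of_cutRowSpan_eq <| by
            rw [← map_comap_cutRowSpan X, ← map_comap_cutRowSpan Y, h]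
    _ ≤ Nat.card (ZMod 2) ^ finrank (ZMod 2) R ^ 2 := Submodule.natCard_le
    _ = 2 ^ (cutRank G A ^ 2) := by rw [Nat.card_zmod, finrank_cutRowSpan_univ]
end
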